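/- The operator T on ℓ²(ℕ, ℂ) defined by (Tx)₀ = x₀ + x₁, (Tx)₁ = x₁, (Tx)₂ = x₁, and (Tx)ₙ = √8 · xₙ₋₁ for all n ≥ 3 satisfies T e₀ = e₀ and T* e₀ = e₀ + e₁, where (eₙ) is the standard orthonormal basis of ℓ²(ℕ, ℂ); in particular, e₀ is an eigenvector of T for the eigenvalue 1 but is not an eigenvector of T* for the eigenvalue 1, so T is not *-paranormal. -/

import Mathlib

/-!
Testing the defining inequality of *-paranormality at an eigenvector `T x = μ x` gives
`‖T* x‖ ≤ |μ| ‖x‖`. Here `T e₀ = e₀`, while `T* e₀ = e₀ + e₁` has norm `√2 > 1`, because the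
only coordinate of `T x` that involves `x₀` is `(T x)₀ = x₀ + x₁`.
-/

open ContinuousLinearMap

section StarParanormal

variable {𝕜 E : Type*} [RCLike 𝕜] [NormedAddCommGroup E] [InnerProductSpace 𝕜 E] [CompleteSpace E]

def IsStarParanormal (T : E →L[𝕜] E) : Prop :=
  ∀ x, ‖adjoint T x‖ ^ 2 ≤ ‖T (T x)‖ * ‖x‖

theorem IsStarParanormal.norm_adjoint_apply_le_of_apply_eq_smul {T : E →L[𝕜] E}
    (hT : IsStarParanormal T) {x : E} {μ : 𝕜} (hx : T x = μ • x) :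
    ‖adjoint T x‖ ≤ ‖μ‖ * ‖x‖ := by
  rw [← sq_le_sq₀ (norm_nonneg _) (by positivity)]
  calc ‖adjoint T x‖ ^ 2 ≤ ‖T (T x)‖ * ‖x‖ := hT x
    _ = (‖μ‖ * ‖x‖) ^ 2 := by rw [hx, map_smul, hx, norm_smul, norm_smul]; ring

end StarParanormal

namespace lp

variable {𝕜 ι : Type*} [RCLike 𝕜] [DecidableEq ι]

theorem norm_single_add_single_sq {i j : ι} (hij : i ≠ j) (a b : 𝕜) :
    ‖(lp.single 2 i a + lp.single 2 j b : lp (fun _ : ι => 𝕜) 2)‖ ^ 2 = ‖a‖ ^ 2 + ‖b‖ ^ 2 := by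
  have horth : inner 𝕜 (lp.single 2 i a : lp (fun _ : ι => 𝕜) 2) (lp.single 2 j b) = 0 := by
    simp [lp.inner_single_right, hij.symm]
  rw [sq, sq, sq, norm_add_sq_eq_norm_sq_add_norm_sq_of_inner_eq_zero _ _ horth,
    lp.norm_single two_pos, lp.norm_single two_pos]

theorem adjoint_apply_single_one_of_apply_eq_add
    {T : lp (fun _ : ι => 𝕜) 2 →L[𝕜] lp (fun _ : ι => 𝕜) 2} {i j k : ι} (hT : ∀ x, T x i = x j + x k) :
    adjoint T (lp.single 2 i 1) = lp.single 2 j 1 + lp.single 2 k 1 := by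
  refine ext_inner_left 𝕜 fun x => ?_
  rw [adjoint_inner_right, inner_add_right, lp.inner_single_right, lp.inner_single_right,
    lp.inner_single_right, hT]
  simp [mul_add]

end lp

/-- The operator `T` on `ℓ²(ℕ, ℂ)` given by `(Tx)₀ = x₀ + x₁`, `(Tx)₁ = x₁`,
`(Tx)₂ = x₁`, `(Tx)ₙ = √8 · xₙ₋₁` for `n ≥ 3` satisfies `T e₀ = e₀` and
`T* e₀ = e₀ + e₁` (where `eₙ` is the standard orthonormal basis); in particular `e₀`
is an eigenvector of `T` for `1` but not of `T*` for `1`, so `T` is not *-paranormal. -/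
theorem shiftlike_not_starParanormal
    (T : lp (fun _ : ℕ => ℂ) 2 →L[ℂ] lp (fun _ : ℕ => ℂ) 2)
    (hT : ∀ x : lp (fun _ : ℕ => ℂ) 2,
      (T x) 0 = x 0 + x 1 ∧ (T x) 1 = x 1 ∧ (T x) 2 = x 1 ∧
      ∀ n : ℕ, 3 ≤ n → (T x) n = (Real.sqrt 8 : ℂ) * x (n - 1)) :
    T (lp.single 2 0 1) = lp.single 2 0 1 ∧
    adjoint T (lp.single 2 0 1) = lp.single 2 0 1 + lp.single 2 1 1 ∧
    adjoint T (lp.single 2 0 1) ≠ lp.single 2 0 1 ∧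
    ¬ (∀ x : lp (fun _ : ℕ => ℂ) 2, ‖adjoint T x‖ ^ 2 ≤ ‖T (T x)‖ * ‖x‖) := by
  have hfix : T (lp.single 2 0 1) = lp.single 2 0 1 := by
    obtain ⟨h0, h1, h2, hshift⟩ := hT (lp.single 2 0 1)
    ext n
    match n with
    | 0 => simp [h0]
    | 1 => simp [h1]
    | 2 => simp [h2]
    | m + 3 => simp [hshift (m + 3) (by omega)]
  have hadj := lp.adjoint_apply_single_one_of_apply_eq_add fun x => (hT x).1
  have hnorm : ‖adjoint T (lp.single 2 0 1)‖ ^ 2 = 2 := by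
    rw [hadj, lp.norm_single_add_single_sq zero_ne_one]
    norm_num
  refine ⟨hfix, hadj, ?_, fun (hpara : IsStarParanormal T) => ?_⟩
  · rw [hadj, Ne, add_eq_left, ← norm_eq_zero, lp.norm_single two_pos]
    norm_num
  · have hle := hpara.norm_adjoint_apply_le_of_apply_eq_smul (μ := 1) (by rw [hfix, one_smul])
    rw [lp.norm_single two_pos, norm_one, one_mul] at hle
    nlinarith [norm_nonneg (adjoint T (lp.single 2 0 1))]
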